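/- Let J be a model structure on ℂⁿ and let N be the graph {zⁿ = φ('z,'z̄)} of a smooth function φ on ℂ^{n−1}. Then N is a J-complex hypersurface if and only if L̃_{2n,2j−1} = −2i ∂φ/∂z̄^j for every j = 1,…,n−1. -/

import Mathlib

open Complex BigOperators

/-- The entries `L̃_{2n,2j-1}(z,z̄) = Σ_{l ≠ j} (α_l^j z^l + β_l^j conj(z^l))` of the
complexified model structure (the coefficients of `conj(v_j)` in the last row). -/
noncomputable def Ltilde (n : ℕ) (α β : Fin n → Fin n → ℂ) (k : Fin n) (z : Fin n → ℂ) : ℂ :=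
  ∑ l : Fin n, if l = k ∨ (l : ℕ) + 1 = n then 0
    else (α l k * z l + β l k * (starRingEnd ℂ) (z l))

/-- The model almost complex structure on `ℂⁿ` in complex coordinates:
`(Jv)_k = i v_k` for `k < n`, `(Jv)_n = i v_n + Σ_j L̃_j(z) conj(v_j)`. -/
noncomputable def modelJ (n : ℕ) (α β : Fin n → Fin n → ℂ)
    (z : Fin n → ℂ) (v : Fin n → ℂ) : Fin n → ℂ := fun k =>
  if (k : ℕ) + 1 = n then
    Complex.I * v k +
      ∑ j : Fin n, (if (j : ℕ) + 1 = n then 0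
        else Ltilde n α β j z * (starRingEnd ℂ) (v j))
  else Complex.I * v k

/-- The Wirtinger derivative `∂f/∂z̄^j = ½(∂f/∂x^j + i ∂f/∂y^j)` of `f : ℂⁿ → ℂ`. -/
noncomputable def dbar (n : ℕ) (f : (Fin n → ℂ) → ℂ) (j : Fin n) (z : Fin n → ℂ) : ℂ :=
  (1 / 2 : ℂ) * (fderiv ℝ f z (Pi.single j 1) +
    Complex.I * fderiv ℝ f z (Pi.single j Complex.I))

noncomputable def hol (n : ℕ) (f : (Fin n → ℂ) → ℂ) (j : Fin n) (z : Fin n → ℂ) : ℂ :=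
  (1 / 2 : ℂ) * (fderiv ℝ f z (Pi.single j 1) -
    Complex.I * fderiv ℝ f z (Pi.single j Complex.I))

lemma combo (A B : ℂ) (x y : ℝ) :
    x • A + y • B = (1/2 : ℂ) * (A - Complex.I * B) * (x + y * Complex.I)
      + (1/2 : ℂ) * (A + Complex.I * B) * (x - y * Complex.I) := by
  rw [Complex.real_smul, Complex.real_smul]
  linear_combination B * (y:ℂ) * Complex.I_sq

lemma conj_eq (c : ℂ) : (starRingEnd ℂ) c = (c.re : ℂ) - c.im * Complex.I := by
  apply Complex.ext <;> simp

lemma expand {n : ℕ} (φ : (Fin n → ℂ) → ℂ) (z w : Fin n → ℂ) :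
    fderiv ℝ φ z w = ∑ j : Fin n,
      (hol n φ j z * w j + dbar n φ j z * (starRingEnd ℂ) (w j)) := by
  have hsingle : ∀ j : Fin n, (Pi.single j (w j) : Fin n → ℂ)
      = (w j).re • (Pi.single j (1:ℂ) : Fin n → ℂ) + (w j).im • (Pi.single j Complex.I : Fin n → ℂ) := by
    intro j; ext k
    by_cases hk : k = j
    · subst hk; simp [Complex.real_smul, Complex.re_add_im]
    · simp [Pi.single_eq_of_ne hk]
  conv_lhs => rw [← Finset.univ_sum_single w]
  rw [map_sum]
  refine Finset.sum_congr rfl fun j _ => ?_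
  rw [hsingle j, map_add, map_smul, map_smul, combo, conj_eq (w j)]
  simp only [hol, dbar]
  rw [Complex.re_add_im]


/-- let `N = {zⁿ = φ('z,'z̄)}` be the graph of a smooth function `φ` of
the first `n-1` coordinates. The tangent space of `N` at `z` is
`{v : v_n = dφ_z(v)}`. Then `N` is a `J`-complex hypersurface (its tangent spaces
are `J`-invariant) iff the last-row entries of the structure satisfy
`L̃_j = -2i ∂φ/∂z̄^j` for every `j = 1,…,n-1`. -/
theorem stmt7 (n : ℕ) (hn : 1 ≤ n) (α β : Fin n → Fin n → ℂ)
    (φ : (Fin n → ℂ) → ℂ) (hφ : ContDiff ℝ (⊤ : ℕ∞) φ)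
    (hdep : ∀ z w : Fin n → ℂ,
      (∀ k : Fin n, (k : ℕ) + 1 < n → z k = w k) → φ z = φ w) :
    (∀ z : Fin n → ℂ, z ⟨n - 1, by omega⟩ = φ z →
        ∀ v : Fin n → ℂ, v ⟨n - 1, by omega⟩ = fderiv ℝ φ z v →
          (modelJ n α β z v) ⟨n - 1, by omega⟩ =
            fderiv ℝ φ z (modelJ n α β z v)) ↔
      (∀ (z : Fin n → ℂ) (j : Fin n), (j : ℕ) + 1 < n →
        Ltilde n α β j z = (-2) * Complex.I * dbar n φ j z) := by
  have hφd : Differentiable ℝ φ := hφ.differentiable (by simp)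
  have hm' : n - 1 < n := by omega
  set m : Fin n := ⟨n - 1, hm'⟩ with hmdef
  have hm : (m : ℕ) + 1 = n := by simp only [hmdef]; omega
  set P : (Fin n → ℂ) →L[ℝ] (Fin n → ℂ) :=
    ContinuousLinearMap.pi (fun k : Fin n =>
      if (k : ℕ) + 1 = n then 0 else ContinuousLinearMap.proj k) with hPdef
  have hPapp : ∀ (w : Fin n → ℂ) (k : Fin n),
      P w k = if (k : ℕ) + 1 = n then 0 else w k := by
    intro w k
    simp only [hPdef, ContinuousLinearMap.pi_apply]
    split <;> simp
  have hφP : ∀ w, φ (P w) = φ w := by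
    intro w
    refine hdep _ _ fun k hk => ?_
    rw [hPapp, if_neg (by omega)]
  have hD : ∀ z : Fin n → ℂ, fderiv ℝ φ z = (fderiv ℝ φ (P z)).comp P := by
    intro z
    have h1 : φ ∘ ⇑P = φ := funext hφP
    conv_lhs => rw [← h1]
    rw [fderiv_comp z (hφd _) P.differentiableAt, P.fderiv]
  have hDapp : ∀ (z w : Fin n → ℂ), fderiv ℝ φ z w = fderiv ℝ φ (P z) (P w) := by
    intro z w; rw [hD z]; rfl
  have hDm : ∀ (z : Fin n → ℂ) (c : ℂ), fderiv ℝ φ z (Pi.single m c) = 0 := by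
    intro z c
    rw [hDapp]
    have hp : P (Pi.single m c) = 0 := by
      ext k
      rw [hPapp]
      split_ifs with h
      · simp
      · have hk : k ≠ m := fun hh => h (hh ▸ hm)
        simp [Pi.single_eq_of_ne hk]
    rw [hp, map_zero]
  have hDeq : ∀ z z', P z = P z' → fderiv ℝ φ z = fderiv ℝ φ z' := by
    intro z z' h; rw [hD z, hD z', h]
  have hdbarm : ∀ z : Fin n → ℂ, dbar n φ m z = 0 := by
    intro z; simp [dbar, hDm]
  have key : ∀ (z v : Fin n → ℂ), v m = fderiv ℝ φ z v →
      ((modelJ n α β z v) m = fderiv ℝ φ z (modelJ n α β z v) ↔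
        ∑ j : Fin n, (if (j : ℕ) + 1 = n then 0
          else (Ltilde n α β j z + 2 * Complex.I * dbar n φ j z)
            * (starRingEnd ℂ) (v j)) = 0) := by
    intro z v hv
    have hJm : (modelJ n α β z v) m = Complex.I * v m +
        ∑ j : Fin n, (if (j : ℕ) + 1 = n then 0
          else Ltilde n α β j z * (starRingEnd ℂ) (v j)) := by
      simp only [modelJ]; rw [if_pos hm]
    have hPJ : P (modelJ n α β z v) = P (fun k => Complex.I * v k) := by
      ext k
      rw [hPapp, hPapp]
      split_ifs with h
      · rfl
      · simp only [modelJ]; rw [if_neg h]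
    have hDJ : fderiv ℝ φ z (modelJ n α β z v)
        = fderiv ℝ φ z (fun k => Complex.I * v k) := by
      rw [hDapp, hPJ, ← hDapp]
    rw [hJm, hDJ, hv, expand φ z v, expand φ z (fun k => Complex.I * v k)]
    rw [← sub_eq_zero]
    have hrw : Complex.I * (∑ j : Fin n, (hol n φ j z * v j
          + dbar n φ j z * (starRingEnd ℂ) (v j)))
        + (∑ j : Fin n, (if (j : ℕ) + 1 = n then 0
            else Ltilde n α β j z * (starRingEnd ℂ) (v j)))
        - (∑ j : Fin n, (hol n φ j z * ((fun k => Complex.I * v k) j)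
            + dbar n φ j z * (starRingEnd ℂ) ((fun k => Complex.I * v k) j)))
        = ∑ j : Fin n, (if (j : ℕ) + 1 = n then 0
            else (Ltilde n α β j z + 2 * Complex.I * dbar n φ j z)
              * (starRingEnd ℂ) (v j)) := by
      rw [Finset.mul_sum, ← Finset.sum_add_distrib, ← Finset.sum_sub_distrib]
      refine Finset.sum_congr rfl fun j _ => ?_
      simp only [map_mul, Complex.conj_I]
      by_cases hj : (j : ℕ) + 1 = n
      · have hjm : j = m := by
          apply Fin.ext; simp only [hmdef]; omega
        subst hjm
        rw [if_pos hj, if_pos hj, hdbarm z]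
        ring
      · rw [if_neg hj, if_neg hj]
        ring
    rw [hrw]
  constructor
  · intro h z j hj
    have hjm : j ≠ m := by
      intro hh
      have : (j : ℕ) = n - 1 := congrArg Fin.val hh
      omega
    set z' : Fin n → ℂ := fun k => if (k : ℕ) + 1 = n then φ z else z k with hz'def
    have hPz : P z' = P z := by
      ext k
      rw [hPapp, hPapp]
      split_ifs with hk
      · rfl
      · simp only [hz'def]; rw [if_neg hk]
    have hφz' : φ z' = φ z := by
      refine hdep _ _ fun k hk => ?_
      simp only [hz'def]; rw [if_neg (by omega)]
    have hz'm : z' m = φ z' := by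
      simp only [hz'def]; rw [if_pos hm, hφz']
    set c : ℂ := fderiv ℝ φ z' (Pi.single j 1) with hcdef
    set v : Fin n → ℂ := Pi.single j 1 + Pi.single m c with hvdef
    have hvm : v m = fderiv ℝ φ z' v := by
      have h1 : v m = c := by
        simp only [hvdef, Pi.add_apply, Pi.single_eq_of_ne (Ne.symm hjm),
          Pi.single_eq_same, zero_add]
      have h2 : fderiv ℝ φ z' v = c := by
        simp only [hvdef]
        rw [map_add, hDm, add_zero, hcdef]
      rw [h1, h2]
    have hsum := (key z' v hvm).mp (h z' hz'm v hvm)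
    rw [Finset.sum_eq_single j] at hsum
    · rw [if_neg (by omega)] at hsum
      have hvj : v j = 1 := by
        simp only [hvdef, Pi.add_apply, Pi.single_eq_same,
          Pi.single_eq_of_ne hjm, add_zero]
      rw [hvj, map_one, mul_one] at hsum
      have hL : Ltilde n α β j z' = Ltilde n α β j z := by
        simp only [Ltilde]
        refine Finset.sum_congr rfl fun l _ => ?_
        split_ifs with hl
        · rfl
        · have : z' l = z l := by
            simp only [hz'def]
            rw [if_neg (fun hh => hl (Or.inr hh))]
          rw [this]
      have hdb : dbar n φ j z' = dbar n φ j z := by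
        simp only [dbar]; rw [hDeq z' z hPz]
      rw [hL, hdb] at hsum
      linear_combination hsum
    · intro b _ hb
      split_ifs with hbn
      · rfl
      · have hbm : b ≠ m := fun hh => hbn (hh ▸ hm)
        have : v b = 0 := by
          simp only [hvdef, Pi.add_apply, Pi.single_eq_of_ne hb,
            Pi.single_eq_of_ne hbm, add_zero]
        rw [this, map_zero, mul_zero]
    · intro hj'; exact absurd (Finset.mem_univ j) hj'
  · intro h z hz v hv
    refine (key z v hv).mpr ?_
    refine Finset.sum_eq_zero fun j _ => ?_
    split_ifs with hj
    · rfl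
    · have hjlt : (j : ℕ) + 1 < n := by have := j.isLt; omega
      rw [h z j hjlt]
      ring
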